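/- arXiv:2510.16667 — 5 statements merged into one kernel-verified Lean document; each statement's English description precedes it below -/
import Mathlib

section
/- There exists a sequence (Q_n)_{n≥1} of noncommutative polynomials in ℂ⟨X_1,…,X_d⟩, with Q_n of degree n, such that liminf_{n→∞} ‖Q_n(x)‖ / (√((1/3)(n+1)(n+3/2)(n+2)) · ‖Q_n(x)‖₂) ≥ √(3/8). -/
open scoped ComplexOrder TensorProduct

noncomputable section

/-- Free Chebyshev polynomials, indexed by a word read left-to-right:
`cheb [i_n, ..., i_1] = P_{i_n, ..., i_1}`. -/
def cheb {d : ℕ} : List (Fin d) → FreeAlgebra ℂ (Fin d)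
  | [] => 1
  | [i] => FreeAlgebra.ι ℂ i
  | i :: j :: t => FreeAlgebra.ι ℂ i * cheb (j :: t) - (if i = j then (1 : ℂ) else 0) • cheb t

/-- A faithful tracial state on a `*`-algebra. -/
def IsFaithfulTracialState {A : Type*} [Ring A] [StarRing A] [Algebra ℂ A]
    (τ : A →ₗ[ℂ] ℂ) : Prop :=
  τ 1 = 1 ∧ (∀ a : A, 0 ≤ τ (star a * a)) ∧ (∀ a : A, τ (star a * a) = 0 → a = 0) ∧
    ∀ a b : A, τ (a * b) = τ (b * a)

/-- The `k`-th moment of the standard semicircle distribution on `[-2, 2]`. -/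
def semicircleMoment (k : ℕ) : ℝ :=
  (1 / (2 * Real.pi)) * ∫ t in (-2 : ℝ)..2, t ^ k * Real.sqrt (4 - t ^ 2)

/-- `x` is a free semicircular system with respect to `τ`. -/
def IsFreeSemicircular {A : Type*} [Ring A] [StarRing A] [Algebra ℂ A] {d : ℕ}
    (τ : A →ₗ[ℂ] ℂ) (x : Fin d → A) : Prop :=
  (∀ i, star (x i) = x i) ∧
  (∀ i k, τ (x i ^ k) = (semicircleMoment k : ℂ)) ∧
  ∀ (k : ℕ) (j : Fin (k + 1) → Fin d),
    (∀ s : Fin k, j s.castSucc ≠ j s.succ) →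
    ∀ p : Fin (k + 1) → Polynomial ℂ,
      τ ((List.ofFn fun s : Fin (k + 1) =>
        Polynomial.aeval (x (j s)) (p s)
          - τ (Polynomial.aeval (x (j s)) (p s)) • (1 : A))).prod = 0

/-- The `L²`-norm `‖z‖₂ = τ(z z*)^{1/2}` associated with `τ`. -/
def l2norm {A : Type*} [Ring A] [StarRing A] [Algebra ℂ A] (τ : A →ₗ[ℂ] ℂ) (z : A) : ℝ :=
  Real.sqrt (τ (z * star z)).re

/-- Noncommutative polynomials of degree at most `n`. -/
def degLE (d n : ℕ) : Submodule ℂ (FreeAlgebra ℂ (Fin d)) :=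
  Submodule.span ℂ
    {w | ∃ I : List (Fin d), I.length ≤ n ∧ w = (I.map (FreeAlgebra.ι ℂ)).prod}

/-- Elements homogeneous of degree `n`. -/
def chebHomog {A : Type*} [Ring A] [Algebra ℂ A] {d : ℕ} (x : Fin d → A) (n : ℕ) :
    Submodule ℂ A :=
  Submodule.span ℂ
    {a | ∃ I : List (Fin d), I.length = n ∧ a = FreeAlgebra.lift ℂ x (cheb I)}

/-- `‖P_n f‖₂`, the `ℓ²`-norm of the degree-`n` free Chebyshev coefficients of `f`. -/
def chebProjL2 {A : Type*} [Ring A] [StarRing A] [Algebra ℂ A] {d : ℕ}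
    (τ : A →ₗ[ℂ] ℂ) (x : Fin d → A) (n : ℕ) (f : A) : ℝ :=
  Real.sqrt (∑ I : Fin n → Fin d,
    ‖τ (f * star (FreeAlgebra.lift ℂ x (cheb (List.ofFn I))))‖ ^ 2)

/-- The rescaled Chebyshev polynomials of the second kind, `𝒰_n(X) = U_n(X/2)`. -/
def chebU : ℕ → Polynomial ℂ
  | 0 => 1
  | 1 => Polynomial.X
  | n + 2 => Polynomial.X * chebU (n + 1) - chebU n

end

/-!
Take `Q_n = ∑_{k ≤ n} 𝒰_k(X_1)`, where `𝒰_k(2 cos θ) sin θ = sin ((k + 1) θ)` is Mathlib's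
`Chebyshev.S ℝ k`. The `𝒰_k` are orthonormal for the semicircle law, so `‖Q_n(x)‖₂ = √(n + 1)`.
Since `|𝒰_k| ≤ k + 1` on `[-2, 2]`, the moments of `Q_n(x)` grow at most like
`((n + 1)(n + 2)/2)^{2m}`, and faithfulness of `τ` turns this into
`‖Q_n(x)‖ ≤ (n + 1)(n + 2)/2`; this bounds the ratio by `1`, so the `liminf` is meaningful.
For the lower bound, `‖a‖ τ(b²) ≥ τ(b a b)` for self-adjoint `a` and `b = b*`. With `b = Q_{8n}(x)`, the
linearisation `τ(𝒰_i 𝒰_j 𝒰_k) ∈ {0, 1}` (triangle and parity condition) gives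
`τ(b Q_n(x) b) ≥ (6n + 1)(n + 1)(n + 2)/2` against `τ(b²) = 8n + 1`, so the ratio is
asymptotically at least `3√3/8 > √(3/8)`.
-/

open Polynomial Polynomial.Chebyshev Real

theorem pow_mul_cutoff_sq_le {r : ℝ} (hr : 0 ≤ r) (m : ℕ) (t : ℝ) :
    r ^ (2 * m) * (min 1 (max 0 (|t| - r)) * min 1 (max 0 (|t| - r))) ≤ t ^ (2 * m) := by
  rw [← (even_two_mul m).pow_abs t]
  rcases le_or_gt (|t|) r with ht | ht
  · simp [ht]
  · have hf1 : min 1 (max 0 (|t| - r)) * min 1 (max 0 (|t| - r)) ≤ 1 := by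
      have := min_le_left 1 (max 0 (|t| - r))
      have := le_min zero_le_one (le_max_left 0 (|t| - r))
      nlinarith
    calc _ ≤ r ^ (2 * m) * 1 := by gcongr
      _ ≤ |t| ^ (2 * m) := by rw [mul_one]; gcongr

section CStarAlgebra

variable {A : Type*} [CStarAlgebra A] {τ : A →ₗ[ℂ] ℂ}

theorem LinearMap.nonneg_apply_of_nonneg [PartialOrder A] [StarOrderedRing A]
    (hpos : ∀ a, 0 ≤ τ (star a * a)) {z : A} (hz : 0 ≤ z) : 0 ≤ τ z := by
  obtain ⟨b, rfl⟩ := CStarAlgebra.nonneg_iff_eq_star_mul_self.mp hz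
  exact hpos b

theorem IsSelfAdjoint.re_apply_star_mul_mul_le (hpos : ∀ a, 0 ≤ τ (star a * a)) {a : A}
    (ha : IsSelfAdjoint a) (b : A) :
    (τ (star b * a * b)).re ≤ ‖a‖ * (τ (star b * b)).re := by
  let _ := CStarAlgebra.spectralOrder A
  have _ := CStarAlgebra.spectralOrderedRing A
  have hconj : 0 ≤ star b * (algebraMap ℝ A ‖a‖ - a) * b :=
    star_left_conjugate_nonneg (sub_nonneg.mpr ha.le_algebraMap_norm_self) b
  have hexpand : star b * (algebraMap ℝ A ‖a‖ - a) * b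
      = (‖a‖ : ℂ) • (star b * b) - star b * a * b := by
    rw [mul_sub, sub_mul, Algebra.algebraMap_eq_smul_one, mul_smul_one, smul_mul_assoc,
      Complex.coe_smul]
  have h := (Complex.nonneg_iff.mp (τ.nonneg_apply_of_nonneg hpos hconj)).1
  rw [hexpand, map_sub, map_smul, Complex.sub_re, smul_eq_mul, Complex.re_ofReal_mul] at h
  linarith

/-- If `M < r < ‖a‖`, the cut-off `c = f(a)` with `f = min 1 (max 0 (|·| - r))` is nonzero and
`a ^ (2m) ≥ r ^ (2m) c²`, so `r ^ (2m) τ(c²) ≤ M ^ (2m)` for all `m`, contradicting `τ(c²) > 0`. -/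
theorem IsSelfAdjoint.norm_le_of_re_apply_pow_le (hpos : ∀ a, 0 ≤ τ (star a * a))
    (hfaith : ∀ a, τ (star a * a) = 0 → a = 0) {a : A} (ha : IsSelfAdjoint a) {M : ℝ}
    (hM : 0 ≤ M) (hmom : ∀ m : ℕ, (τ (a ^ (2 * m))).re ≤ M ^ (2 * m)) : ‖a‖ ≤ M := by
  let _ := CStarAlgebra.spectralOrder A
  have _ := CStarAlgebra.spectralOrderedRing A
  by_contra! hMa
  have _ : Nontrivial A := ⟨a, 0, fun h => by simp [h] at hMa; linarith⟩
  obtain ⟨r, hMr, hra⟩ := exists_between hMa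
  have hr : 0 < r := hM.trans_lt hMr
  obtain ⟨t₀, ht₀, ht₀a⟩ :=
    (IsometricContinuousFunctionalCalculus.isGreatest_norm_spectrum (𝕜 := ℝ) a).1
  set f : ℝ → ℝ := fun t => min 1 (max 0 (|t| - r))
  have hf : Continuous f := by fun_prop
  set c := cfc f a
  have hft₀ : 0 < f t₀ := by
    simp only [Real.norm_eq_abs] at ht₀a
    simp only [f, lt_min_iff, lt_max_iff]
    exact ⟨one_pos, Or.inr (by linarith)⟩
  have hc : c ≠ 0 := by
    have h := norm_apply_le_norm_cfc f a ht₀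
    rw [Real.norm_of_nonneg hft₀.le] at h
    exact norm_pos_iff.mp (hft₀.trans_le h)
  have hδ : 0 < (τ (star c * c)).re := by
    have h := Complex.nonneg_iff.mp (hpos c)
    exact lt_of_le_of_ne h.1 fun h0 => hc (hfaith c (Complex.ext h0.symm h.2.symm))
  have hbound : ∀ m : ℕ, r ^ (2 * m) * (τ (star c * c)).re ≤ M ^ (2 * m) := by
    intro m
    have hcfc : 0 ≤ a ^ (2 * m) - r ^ (2 * m) • (star c * c) := by
      rw [(cfc_predicate f a).star_eq, ← cfc_mul f f a hf.continuousOn hf.continuousOn,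
        ← cfc_pow_id (R := ℝ) a (2 * m), ← cfc_smul _ _ _ (by fun_prop),
        ← cfc_sub _ _ a (by fun_prop) (by fun_prop)]
      exact cfc_nonneg fun t _ => sub_nonneg.mpr (pow_mul_cutoff_sq_le hr.le m t)
    have h := (Complex.nonneg_iff.mp (τ.nonneg_apply_of_nonneg hpos hcfc)).1
    rw [map_sub, τ.map_smul_of_tower, Complex.sub_re, Complex.smul_re, smul_eq_mul] at h
    linarith [hmom m]
  have hMr' : M / r < 1 := (div_lt_one hr).mpr hMr
  obtain ⟨m, hm⟩ := exists_pow_lt_of_lt_one hδ hMr'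
  have h := (pow_le_pow_of_le_one (by positivity) hMr'.le (by omega : m ≤ 2 * m)).trans_lt hm
  rw [div_pow, div_lt_iff₀ (by positivity)] at h
  linarith [hbound m]

end CStarAlgebra

namespace Polynomial.Chebyshev

theorem S_natCast_add_two (n : ℕ) : S ℝ (n + 2 : ℕ) = X * S ℝ (n + 1 : ℕ) - S ℝ n := by
  push_cast
  exact S_add_two ℝ n

theorem natDegree_S_natCast (n : ℕ) : (S ℝ n).natDegree = n := by
  have h := congrArg natDegree (S_comp_two_mul_X ℝ n)
  rw [natDegree_comp, natDegree_eq_of_degree_eq_some (degree_U_natCast ℝ n)] at h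
  simpa [natDegree_mul_X (two_ne_zero' ℝ[X])] using h

/-- `S n ^ 2 + S (n + 1) ^ 2 - t S n S (n + 1) = 1` gives `(2 S (n + 1) - t S n)² ≤ 4` for
`|t| ≤ 2`, hence `|S (n + 1)| ≤ |S n| + 1`. -/
theorem abs_eval_S_natCast_le {t : ℝ} (ht : |t| ≤ 2) (n : ℕ) : |(S ℝ n).eval t| ≤ n + 1 := by
  induction n with
  | zero => simp
  | succ n ih =>
    have hrel := congrArg (eval t) (S_sq_add_S_sq ℝ n)
    simp only [eval_sub, eval_add, eval_mul, eval_pow, eval_X, eval_one] at hrel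
    set a := (S ℝ n).eval t
    set b := (S ℝ (n + 1)).eval t
    have ht2 : t ^ 2 ≤ 2 ^ 2 := sq_le_sq' (abs_le.mp ht).1 (abs_le.mp ht).2
    have hdev : |2 * b - t * a| ≤ 2 :=
      abs_le_of_sq_le_sq (by nlinarith [sq_nonneg a]) zero_le_two
    have hta : |t * a| ≤ 2 * (n + 1) := by
      rw [abs_mul]; exact mul_le_mul ht ih (abs_nonneg _) zero_le_two
    push_cast
    have := abs_sub_abs_le_abs_sub (2 * b) (t * a)
    rw [abs_mul, abs_two] at this
    linarith

end Polynomial.Chebyshev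

theorem integral_cos_natCast_mul (k : ℕ) :
    ∫ θ in (0 : ℝ)..π, cos (k * θ) = if k = 0 then π else 0 := by
  rcases eq_or_ne k 0 with rfl | hk
  · simp
  · rw [intervalIntegral.integral_comp_mul_left cos (Nat.cast_ne_zero.mpr hk)]
    simp [integral_cos, sin_nat_mul_pi, hk]

theorem integral_mul_sqrt_four_sub_sq {f : ℝ → ℝ} (hf : Continuous f) :
    ∫ t in (-2 : ℝ)..2, f t * √(4 - t ^ 2) = ∫ θ in 0..π, f (2 * cos θ) * (2 * sin θ) ^ 2 := by
  have hsub := intervalIntegral.integral_comp_mul_deriv (a := 0) (b := π)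
    (f := fun θ => 2 * cos θ) (f' := fun θ => -(2 * sin θ))
    (g := fun t => f t * √(4 - t ^ 2))
    (fun θ _ => by simpa using (hasDerivAt_cos θ).const_mul 2) (by fun_prop) (by fun_prop)
  norm_num only [cos_zero, cos_pi, Function.comp, mul_neg, intervalIntegral.integral_neg] at hsub
  rw [intervalIntegral.integral_symm, ← hsub, neg_neg]
  refine intervalIntegral.integral_congr fun θ hθ => ?_
  rw [Set.uIcc_of_le pi_pos.le] at hθ
  have hsqrt : √(4 - (2 * cos θ) ^ 2) = 2 * sin θ := by
    rw [← sqrt_sq (mul_nonneg zero_le_two (sin_nonneg_of_nonneg_of_le_pi hθ.1 hθ.2))]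
    congr 1
    nlinarith [sin_sq_add_cos_sq θ]
  simp only [hsqrt]
  ring

theorem intervalIntegrable_eval_mul_sqrt (p : ℝ[X]) :
    IntervalIntegrable (fun t => p.eval t * √(4 - t ^ 2)) MeasureTheory.volume (-2) 2 :=
  (p.continuous.mul (by fun_prop)).intervalIntegrable _ _

noncomputable def semicircleFunctional : ℝ[X] →ₗ[ℝ] ℝ where
  toFun p := 1 / (2 * π) * ∫ t in (-2 : ℝ)..2, p.eval t * √(4 - t ^ 2)
  map_add' p q := by
    rw [← mul_add, ← intervalIntegral.integral_add (intervalIntegrable_eval_mul_sqrt p)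
      (intervalIntegrable_eval_mul_sqrt q)]
    simp only [eval_add, add_mul]
  map_smul' c p := by
    simp only [eval_smul, smul_eq_mul, mul_assoc, intervalIntegral.integral_const_mul,
      RingHom.id_apply]
    ring

theorem semicircleFunctional_apply (p : ℝ[X]) : semicircleFunctional p =
    1 / (2 * π) * ∫ t in (-2 : ℝ)..2, p.eval t * √(4 - t ^ 2) := rfl

theorem semicircleFunctional_X_pow (k : ℕ) : semicircleFunctional (X ^ k) = semicircleMoment k := by
  simp [semicircleFunctional_apply, semicircleMoment]

theorem semicircleFunctional_S (m : ℕ) :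
    semicircleFunctional (S ℝ m) = if m = 0 then 1 else 0 := by
  have hint : ∀ θ, (S ℝ m).eval (2 * cos θ) * (2 * sin θ) ^ 2
      = 2 * (cos (m * θ) - cos ((m + 2 : ℕ) * θ)) := fun θ => by
    have h := S_two_mul_real_cos θ m
    have hm : (m : ℝ) * θ = (m + 1) * θ - θ := by ring
    push_cast
    rw [hm, show ((m : ℝ) + 2) * θ = (m + 1) * θ + θ by ring, cos_sub, cos_add]
    push_cast at h
    linear_combination 4 * sin θ * h
  rw [semicircleFunctional_apply, integral_mul_sqrt_four_sub_sq (S ℝ m).continuous]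
  simp_rw [hint]
  rw [intervalIntegral.integral_const_mul, intervalIntegral.integral_sub
      ((by fun_prop : Continuous _).intervalIntegrable _ _)
      ((by fun_prop : Continuous _).intervalIntegrable _ _),
    integral_cos_natCast_mul, integral_cos_natCast_mul]
  rcases eq_or_ne m 0 with rfl | hm
  · field_simp; simp
  · simp [hm]

theorem semicircleFunctional_one : semicircleFunctional 1 = 1 := by
  simpa using semicircleFunctional_S 0

theorem semicircleFunctional_le_of_forall_eval_le {p : ℝ[X]} {M : ℝ}
    (h : ∀ t ∈ Set.Icc (-2 : ℝ) 2, p.eval t ≤ M) : semicircleFunctional p ≤ M := by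
  calc semicircleFunctional p ≤ semicircleFunctional (C M) := by
        rw [semicircleFunctional_apply, semicircleFunctional_apply]
        gcongr
        refine intervalIntegral.integral_mono_on (by norm_num)
          (intervalIntegrable_eval_mul_sqrt p) (intervalIntegrable_eval_mul_sqrt (C M))
          fun t ht => ?_
        rw [eval_C]
        exact mul_le_mul_of_nonneg_right (h t ht) (sqrt_nonneg _)
    _ = M := by
        rw [← mul_one (C M), ← smul_eq_C_mul, map_smul, semicircleFunctional_one, smul_eq_mul,
          mul_one]

theorem semicircleFunctional_S_mul_S :
    ∀ i j : ℕ, semicircleFunctional (S ℝ i * S ℝ j) = if i = j then 1 else 0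
  | 0, j => by
    rw [Nat.cast_zero, S_zero, one_mul, semicircleFunctional_S]
    simp only [eq_comm]
  | i + 1, 0 => by
    rw [Nat.cast_zero, S_zero, mul_one, semicircleFunctional_S]
  | 1, j + 1 => by
    have e : S ℝ (1 : ℕ) * S ℝ (j + 1 : ℕ) = S ℝ (j + 2 : ℕ) + S ℝ j := by
      rw [S_natCast_add_two]; push_cast; rw [S_one]; ring
    rw [e, map_add, semicircleFunctional_S, semicircleFunctional_S]
    split_ifs <;> first | (exfalso; omega) | norm_num
  | i + 2, j + 1 => by
    have e : S ℝ (i + 2 : ℕ) * S ℝ (j + 1 : ℕ) = S ℝ (i + 1 : ℕ) * S ℝ (j + 2 : ℕ)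
        + S ℝ (i + 1 : ℕ) * S ℝ j - S ℝ i * S ℝ (j + 1 : ℕ) := by
      rw [S_natCast_add_two, S_natCast_add_two]; ring
    rw [e, map_sub, map_add, semicircleFunctional_S_mul_S (i + 1) (j + 2),
      semicircleFunctional_S_mul_S (i + 1) j, semicircleFunctional_S_mul_S i (j + 1)]
    split_ifs <;> first | (exfalso; omega) | norm_num

theorem semicircleFunctional_S_mul_S_mul_S : ∀ i j k : ℕ,
    semicircleFunctional (S ℝ i * S ℝ j * S ℝ k)
      = if k ≤ i + j ∧ i ≤ j + k ∧ j ≤ i + k ∧ (i + j + k) % 2 = 0 then 1 else 0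
  | 0, j, k => by
    rw [Nat.cast_zero, S_zero, one_mul, semicircleFunctional_S_mul_S]
    split_ifs <;> first | (exfalso; omega) | rfl
  | i + 1, 0, k => by
    rw [Nat.cast_zero, S_zero, mul_one, semicircleFunctional_S_mul_S]
    split_ifs <;> first | (exfalso; omega) | rfl
  | 1, j + 1, k => by
    have e : S ℝ (1 : ℕ) * S ℝ (j + 1 : ℕ) * S ℝ k = S ℝ (j + 2 : ℕ) * S ℝ k + S ℝ j * S ℝ k := by
      rw [S_natCast_add_two]; push_cast; rw [S_one]; ring
    rw [e, map_add, semicircleFunctional_S_mul_S, semicircleFunctional_S_mul_S]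
    split_ifs <;> first | (exfalso; omega) | norm_num
  | i + 2, j + 1, k => by
    have e : S ℝ (i + 2 : ℕ) * S ℝ (j + 1 : ℕ) * S ℝ k = S ℝ (i + 1 : ℕ) * S ℝ (j + 2 : ℕ) * S ℝ k
        + S ℝ (i + 1 : ℕ) * S ℝ j * S ℝ k - S ℝ i * S ℝ (j + 1 : ℕ) * S ℝ k := by
      rw [S_natCast_add_two, S_natCast_add_two]; ring
    rw [e, map_sub, map_add, semicircleFunctional_S_mul_S_mul_S (i + 1) (j + 2) k,
      semicircleFunctional_S_mul_S_mul_S (i + 1) j k,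
      semicircleFunctional_S_mul_S_mul_S i (j + 1) k]
    split_ifs <;> first | (exfalso; omega) | norm_num

theorem semicircleFunctional_S_mul_S_mul_S_nonneg (i j k : ℕ) :
    0 ≤ semicircleFunctional (S ℝ i * S ℝ j * S ℝ k) := by
  rw [semicircleFunctional_S_mul_S_mul_S]
  split_ifs <;> norm_num

open Finset in
theorem sum_range_natCast_add_one (n : ℕ) :
    ∑ k ∈ range (n + 1), ((k : ℝ) + 1) = (n + 1) * (n + 2) / 2 := by
  induction n with
  | zero => norm_num
  | succ n ih => rw [sum_range_succ, ih]; push_cast; ring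

namespace Polynomial.Chebyshev

open Finset

noncomputable def sumS (n : ℕ) : ℝ[X] := ∑ k ∈ range (n + 1), S ℝ k

theorem natDegree_sumS (n : ℕ) : (sumS n).natDegree = n := by
  induction n with
  | zero => simp [sumS]
  | succ n ih =>
    rw [sumS, sum_range_succ, ← sumS, natDegree_add_eq_right_of_natDegree_lt] <;>
      rw [natDegree_S_natCast]
    omega

theorem abs_eval_sumS_le {t : ℝ} (ht : |t| ≤ 2) (n : ℕ) :
    |(sumS n).eval t| ≤ (n + 1) * (n + 2) / 2 := by
  rw [sumS, eval_finsetSum, ← sum_range_natCast_add_one]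
  exact (abs_sum_le_sum_abs _ _).trans (sum_le_sum fun k _ => abs_eval_S_natCast_le ht k)

theorem semicircleFunctional_sumS_mul_self (n : ℕ) :
    semicircleFunctional (sumS n * sumS n) = n + 1 := by
  simp only [sumS, sum_mul_sum, map_sum, semicircleFunctional_S_mul_S, sum_ite_eq, mem_range]
  rw [sum_congr rfl fun i hi => if_pos (mem_range.mp hi)]
  simp

theorem semicircleFunctional_sumS_mul_mul (m n : ℕ) :
    semicircleFunctional (sumS m * sumS n * sumS m) = ∑ k ∈ range (n + 1),
      ∑ i ∈ range (m + 1), ∑ j ∈ range (m + 1), semicircleFunctional (S ℝ i * S ℝ k * S ℝ j) := by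
  simp only [sumS, sum_mul, mul_sum, map_sum]
  simp_rw [sum_comm (s := range (m + 1)) (t := range (n + 1))]
  exact sum_congr rfl fun k _ => sum_comm

/-- For `k ≤ i` and `i + k ≤ m`, the `k + 1` indices `j = i - k, i - k + 2, …, i + k` all
contribute `1`. -/
theorem natCast_add_one_le_sum_semicircleFunctional {i k m : ℕ} (hki : k ≤ i) (hikm : i + k ≤ m) :
    (k : ℝ) + 1 ≤ ∑ j ∈ range (m + 1), semicircleFunctional (S ℝ i * S ℝ k * S ℝ j) := by
  set J := (range (k + 1)).image (fun r => i - k + 2 * r)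
  have hJ : J.card = k + 1 := by
    rw [card_image_of_injective _ fun r₁ r₂ h => by omega, card_range]
  have hJ1 : ∀ j ∈ J, semicircleFunctional (S ℝ i * S ℝ k * S ℝ j) = 1 := fun j hj => by
    obtain ⟨r, hr, rfl⟩ := mem_image.mp hj
    rw [mem_range] at hr
    rw [semicircleFunctional_S_mul_S_mul_S, if_pos (by omega)]
  calc (k : ℝ) + 1 = ∑ j ∈ J, semicircleFunctional (S ℝ i * S ℝ k * S ℝ j) := by
        rw [sum_congr rfl hJ1, sum_const, hJ, nsmul_one]; push_cast; ring
    _ ≤ _ := sum_le_sum_of_subset_of_nonneg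
        (fun j hj => by obtain ⟨r, hr, rfl⟩ := mem_image.mp hj; rw [mem_range] at hr ⊢; omega)
        fun j _ _ => semicircleFunctional_S_mul_S_mul_S_nonneg i k j

theorem le_semicircleFunctional_sumS_mul_mul {m n : ℕ} (h : 2 * n ≤ m) :
    ((m : ℝ) - 2 * n + 1) * ((n + 1) * (n + 2) / 2)
      ≤ semicircleFunctional (sumS m * sumS n * sumS m) := by
  rw [semicircleFunctional_sumS_mul_mul, ← sum_range_natCast_add_one, mul_sum]
  refine sum_le_sum fun k hk => ?_
  have hkn : k ≤ n := Nat.lt_succ_iff.mp (mem_range.mp hk)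
  calc ((m : ℝ) - 2 * n + 1) * (k + 1) ≤ (Icc k (m - k)).card * ((k : ℝ) + 1) := by
        gcongr
        rw [Nat.card_Icc, show m - k + 1 - k = m - 2 * k + 1 by omega, Nat.cast_add,
          Nat.cast_sub (by omega)]
        push_cast
        linarith [(Nat.cast_le (α := ℝ)).mpr hkn]
    _ = ∑ i ∈ Icc k (m - k), ((k : ℝ) + 1) := by rw [sum_const, nsmul_eq_mul]
    _ ≤ ∑ i ∈ Icc k (m - k), ∑ j ∈ range (m + 1), semicircleFunctional (S ℝ i * S ℝ k * S ℝ j) :=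
        sum_le_sum fun i hi => by
          rw [mem_Icc] at hi
          exact natCast_add_one_le_sum_semicircleFunctional hi.1 (by omega)
    _ ≤ _ := sum_le_sum_of_subset_of_nonneg (fun i hi => by simp at hi ⊢; omega)
        fun i _ _ => sum_nonneg fun j _ => semicircleFunctional_S_mul_S_mul_S_nonneg i k j

end Polynomial.Chebyshev

section Semicircular

variable {A : Type*} [CStarAlgebra A] {τ : A →ₗ[ℂ] ℂ} {y : A}

theorem IsSelfAdjoint.aeval (hy : IsSelfAdjoint y) (P : ℝ[X]) : IsSelfAdjoint (aeval y P) := by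
  rw [← cfc_polynomial P y]
  exact cfc_predicate _ y

theorem apply_aeval_eq_semicircleFunctional (hmom : ∀ k, τ (y ^ k) = semicircleMoment k)
    (P : ℝ[X]) : τ (aeval y P) = semicircleFunctional P := by
  induction P using Polynomial.induction_on' with
  | add p q hp hq => simp only [map_add, hp, hq, Complex.ofReal_add]
  | monomial k c =>
    rw [aeval_monomial, ← Algebra.smul_def, τ.map_smul_of_tower, hmom, ← smul_X_eq_monomial,
      map_smul, semicircleFunctional_X_pow, Complex.real_smul, smul_eq_mul, Complex.ofReal_mul]

theorem norm_aeval_le_of_forall_abs_eval_le (hpos : ∀ a, 0 ≤ τ (star a * a))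
    (hfaith : ∀ a, τ (star a * a) = 0 → a = 0) (hy : IsSelfAdjoint y)
    (hmom : ∀ k, τ (y ^ k) = semicircleMoment k) {P : ℝ[X]} {M : ℝ} (hM : 0 ≤ M)
    (hPM : ∀ t ∈ Set.Icc (-2 : ℝ) 2, |P.eval t| ≤ M) : ‖aeval y P‖ ≤ M := by
  refine (hy.aeval P).norm_le_of_re_apply_pow_le hpos hfaith hM fun m => ?_
  rw [← map_pow, apply_aeval_eq_semicircleFunctional hmom, Complex.ofReal_re]
  refine semicircleFunctional_le_of_forall_eval_le fun t ht => ?_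
  rw [eval_pow, ← (even_two_mul m).pow_abs]
  exact pow_le_pow_left₀ (abs_nonneg _) (hPM t ht) _

theorem semicircleFunctional_mul_mul_le (hpos : ∀ a, 0 ≤ τ (star a * a)) (hy : IsSelfAdjoint y)
    (hmom : ∀ k, τ (y ^ k) = semicircleMoment k) (P Q : ℝ[X]) :
    semicircleFunctional (Q * P * Q) ≤ ‖aeval y P‖ * semicircleFunctional (Q * Q) := by
  have h := (hy.aeval P).re_apply_star_mul_mul_le hpos (aeval y Q)
  rwa [(hy.aeval Q).star_eq, ← map_mul, ← map_mul, ← map_mul,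
    apply_aeval_eq_semicircleFunctional hmom, apply_aeval_eq_semicircleFunctional hmom,
    Complex.ofReal_re, Complex.ofReal_re] at h

end Semicircular

section FreeAlgebra

variable {d n : ℕ}

theorem aeval_ι_mem_degLE (i : Fin d) {p : ℂ[X]} (hp : p.natDegree ≤ n) :
    aeval (FreeAlgebra.ι ℂ i) p ∈ degLE d n := by
  rw [p.as_sum_range' (n + 1) (Nat.lt_succ_of_le hp), map_sum]
  refine Submodule.sum_mem _ fun k hk => ?_
  rw [aeval_monomial, ← Algebra.smul_def]
  refine Submodule.smul_mem _ _ (Submodule.subset_span ⟨List.replicate k i, ?_, ?_⟩)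
  · rw [List.length_replicate]; exact Nat.lt_succ_iff.mp (Finset.mem_range.mp hk)
  · rw [List.map_replicate, List.prod_replicate]

theorem natDegree_lift_X_le_of_mem_degLE {w : FreeAlgebra ℂ (Fin d)} (hw : w ∈ degLE d n) :
    (FreeAlgebra.lift ℂ (fun _ => (X : ℂ[X])) w).natDegree ≤ n := by
  induction hw using Submodule.span_induction with
  | mem w hw =>
    obtain ⟨I, hI, rfl⟩ := hw
    simpa [map_list_prod, List.map_map, Function.comp_def] using hI
  | zero => simp
  | add u v _ _ hu hv => rw [map_add]; exact (natDegree_add_le _ _).trans (max_le hu hv)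
  | smul c u _ hu => rw [map_smul]; exact (natDegree_smul_le _ _).trans hu

theorem aeval_ι_notMem_degLE (i : Fin d) {p : ℂ[X]} (hp : n < p.natDegree) :
    aeval (FreeAlgebra.ι ℂ i) p ∉ degLE d n := fun h => by
  have := natDegree_lift_X_le_of_mem_degLE h
  rw [← aeval_algHom_apply, FreeAlgebra.lift_ι_apply, aeval_X_left_apply] at this
  omega

end FreeAlgebra

open Filter in
theorem sqrt_three_div_eight_le_liminf {u : ℕ → ℝ} (hup : ∀ n : ℕ, u n ≤ (n + 1) * (n + 2) / 2)
    (hlow : ∀ n : ℕ, (6 * n + 1) * ((n + 1) * (n + 2) / 2) ≤ u n * (8 * n + 1)) :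
    √(3 / 8) ≤ liminf (fun n : ℕ => u n /
      (√((1 / 3) * ((n : ℝ) + 1) * ((n : ℝ) + 3 / 2) * ((n : ℝ) + 2)) * √((n : ℝ) + 1))) atTop := by
  set D : ℕ → ℝ := fun n =>
    √((1 / 3) * ((n : ℝ) + 1) * ((n : ℝ) + 3 / 2) * ((n : ℝ) + 2)) * √((n : ℝ) + 1)
  have hD : ∀ n : ℕ,
      D n = √((1 / 3) * ((n : ℝ) + 1) * ((n : ℝ) + 3 / 2) * ((n : ℝ) + 2) * ((n : ℝ) + 1)) :=
    fun n => (sqrt_mul (by positivity) _).symm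
  have hDpos : ∀ n, 0 < D n := fun n => by rw [hD]; positivity
  refine le_liminf_of_le ?_ (Eventually.of_forall fun n => ?_)
  · refine IsCoboundedUnder.of_frequently_le (a := 1) (Frequently.of_forall fun n => ?_)
    rw [div_le_one (hDpos n)]
    refine (hup n).trans ?_
    rw [hD, le_sqrt (by positivity) (by positivity)]
    nlinarith [(Nat.cast_nonneg n : (0 : ℝ) ≤ n)]
  · have hn : (0 : ℝ) ≤ n := Nat.cast_nonneg n
    rw [le_div_iff₀ (hDpos n)]
    calc √(3 / 8) * D n ≤ (6 * n + 1) * ((n + 1) * (n + 2) / 2) / (8 * n + 1) := by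
          rw [hD, ← sqrt_mul (by norm_num), sqrt_le_iff]
          refine ⟨by positivity, ?_⟩
          rw [div_pow, le_div_iff₀ (by positivity)]
          nlinarith [mul_nonneg
            (mul_nonneg (sq_nonneg ((n : ℝ) + 1)) (by linarith : (0 : ℝ) ≤ n + 2))
            (by positivity : (0 : ℝ) ≤ 16 * n ^ 3 + 112 * n ^ 2 + 50 * n + 5)]
      _ ≤ u n := (div_le_iff₀ (by positivity)).mpr (hlow n)

/-- Optimality of the non-homogeneous Haagerup inequality: there are polynomials
`Q n` of degree `n` with
`liminf ‖Q_n(x)‖ / (√((1/3)(n+1)(n+3/2)(n+2)) ‖Q_n(x)‖₂) ≥ √(3/8)`. -/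
theorem haagerup_optimal {d : ℕ} (hd : 0 < d) {A : Type*} [NormedRing A] [StarRing A]
    [CStarRing A] [CompleteSpace A] [NormedAlgebra ℂ A] [StarModule ℂ A]
    (τ : A →ₗ[ℂ] ℂ) (x : Fin d → A)
    (hτ : IsFaithfulTracialState τ) (hx : IsFreeSemicircular τ x) :
    ∃ Q : ℕ → FreeAlgebra ℂ (Fin d),
      (∀ n : ℕ, 1 ≤ n → Q n ∈ degLE d n ∧ Q n ∉ degLE d (n - 1)) ∧
      Real.sqrt (3 / 8) ≤
        Filter.liminf (fun n : ℕ =>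
          ‖FreeAlgebra.lift ℂ x (Q n)‖ /
            (Real.sqrt ((1 / 3) * ((n : ℝ) + 1) * ((n : ℝ) + 3 / 2) * ((n : ℝ) + 2)) *
              l2norm τ (FreeAlgebra.lift ℂ x (Q n)))) Filter.atTop := by
  let _ : CStarAlgebra A := {}
  obtain ⟨-, hpos, hfaith, -⟩ := hτ
  obtain ⟨hsa, hmom, -⟩ := hx
  set i : Fin d := ⟨0, hd⟩
  have hy : IsSelfAdjoint (x i) := hsa i
  have hdeg (n : ℕ) : ((sumS n).map (algebraMap ℝ ℂ)).natDegree = n := by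
    rw [natDegree_map, natDegree_sumS]
  have hlift (n : ℕ) : FreeAlgebra.lift ℂ x (aeval (FreeAlgebra.ι ℂ i)
      ((sumS n).map (algebraMap ℝ ℂ))) = aeval (x i) (sumS n) := by
    rw [← aeval_algHom_apply, FreeAlgebra.lift_ι_apply, aeval_map_algebraMap]
  have hl2 (n : ℕ) : l2norm τ (aeval (x i) (sumS n)) = √((n : ℝ) + 1) := by
    rw [l2norm, (hy.aeval _).star_eq, ← map_mul, apply_aeval_eq_semicircleFunctional (hmom i),
      semicircleFunctional_sumS_mul_self, Complex.ofReal_re]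
  refine ⟨fun n => aeval (FreeAlgebra.ι ℂ i) ((sumS n).map (algebraMap ℝ ℂ)),
    fun n hn => ⟨aeval_ι_mem_degLE i (hdeg n).le, aeval_ι_notMem_degLE i (by rw [hdeg]; omega)⟩, ?_⟩
  simp_rw [hlift, hl2]
  refine sqrt_three_div_eight_le_liminf (fun n => ?_) (fun n => ?_)
  · exact norm_aeval_le_of_forall_abs_eval_le hpos hfaith hy (hmom i) (by positivity)
      fun t ht => abs_eval_sumS_le (abs_le.mpr ht) n
  · have h := semicircleFunctional_mul_mul_le hpos hy (hmom i) (sumS n) (sumS (8 * n))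
    have h' := le_semicircleFunctional_sumS_mul_mul (m := 8 * n) (n := n) (by omega)
    rw [semicircleFunctional_sumS_mul_self] at h
    push_cast at h h'
    linarith
end

section
/- For every noncommutative polynomial Q ∈ ℂ⟨X_1,…,X_d⟩ and all indices i_1,…,i_n ∈ {1,…,d}, one has τ(P_{i_n,…,i_1}(x) · Q(x)) = Φ(∂_{i_1,…,i_n} Q), where Φ : ℂ⟨X_1,…,X_d⟩^{⊗(n+1)} → ℂ is the linear map determined by Φ(A_1 ⊗ ⋯ ⊗ A_{n+1}) = τ(A_1(x))·τ(A_2(x))⋯τ(A_{n+1}(x)). -/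
open scoped ComplexOrder TensorProduct

noncomputable section

/-- Given a trace functional `tb = τ ∘ ev` on the free algebra and the noncommutative
derivatives `D i`, `PhiD tb D [i_1, …, i_n]` is the functional
`Q ↦ Φ(∂_{i_1,…,i_n} Q)`, where `Φ = tb ⊗ ⋯ ⊗ tb` : it peels off the factorization
at `X_{i_1}` first, applying `tb` to the left factor. -/
def PhiD {d : ℕ} (tb : FreeAlgebra ℂ (Fin d) →ₗ[ℂ] ℂ)
    (D : Fin d → (FreeAlgebra ℂ (Fin d) →ₗ[ℂ]
      FreeAlgebra ℂ (Fin d) ⊗[ℂ] FreeAlgebra ℂ (Fin d))) :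
    List (Fin d) → (FreeAlgebra ℂ (Fin d) →ₗ[ℂ] ℂ)
  | [] => tb
  | i :: r => LinearMap.mul' ℂ ℂ ∘ₗ TensorProduct.map tb (PhiD tb D r) ∘ₗ D i

end

/-!
Both sides are linear in `Q` and the free Chebyshev polynomials `P_J` span `ℂ⟨X⟩`, so it suffices
to show that both sides equal `δ_{L^rev, J}` at `Q = P_J`.

Left side: the product rule `P_{L i} P_{j J} = P_{L i j J} + δ_{ij} P_L P_J` reduces `τ(P_L P_J)`
to the values `τ(P_w(x))`, and these vanish for `w ≠ ∅`. Indeed, cutting `w` into maximal runs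
`i^k` writes `P_w` as an alternating product of one-variable polynomials `S_k(X_i) = U_k(X_i / 2)`,
each `S_k(x_i)` with `k ≥ 1` is centred (substitute `t = 2 cos θ` in the semicircle integral), and
freeness applies.

Right side: `∂_i P_J = ∑_{J = u i v} P_u ⊗ P_v`. Since `τ(P_u) = δ_{u, ∅}`, only the splitting
with `u = ∅` survives the outer `τ`, and induction on `n` gives
`Φ(∂_{i_1 … i_n} P_J) = δ_{i_1 … i_n, J}`.
-/

open Polynomial Polynomial.Chebyshev

section Semicircle

open Real intervalIntegral

theorem integral_cos_nat_mul (n : ℕ) :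
    ∫ θ in (0 : ℝ)..π, cos (n * θ) = if n = 0 then π else 0 := by
  rcases eq_or_ne n 0 with rfl | hn
  · simp
  · rw [if_neg hn, integral_comp_mul_left _ (Nat.cast_ne_zero.2 hn)]
    simp [sin_nat_mul_pi]

theorem integral_eq_integral_comp_two_mul_cos {g : ℝ → ℝ} (hg : Continuous g) :
    ∫ t in (-2 : ℝ)..2, g t = ∫ θ in (0 : ℝ)..π, g (2 * cos θ) * (2 * sin θ) := by
  have h := integral_comp_mul_deriv (a := π) (b := 0) (f := fun θ => 2 * cos θ)
    (f' := fun θ => -(2 * sin θ)) (fun θ _ => by simpa using (hasDerivAt_cos θ).const_mul 2)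
    (by fun_prop) hg
  simp only [Function.comp_def, cos_pi, cos_zero, mul_neg, mul_one, integral_neg] at h
  rw [← h, integral_symm, neg_neg]

theorem integral_S_eval_mul_sqrt (n : ℕ) :
    ∫ t in (-2 : ℝ)..2, (S ℝ n).eval t * √(4 - t ^ 2) = if n = 0 then 2 * π else 0 := by
  have hint : Set.EqOn (fun θ => (S ℝ n).eval (2 * cos θ) * √(4 - (2 * cos θ) ^ 2) * (2 * sin θ))
      (fun θ => 2 * (cos (n * θ) - cos ((n + 2 : ℕ) * θ))) (Set.uIcc 0 π) := by
    intro θ hθ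
    rw [Set.uIcc_of_le pi_nonneg] at hθ
    have hsqrt : √(4 - (2 * cos θ) ^ 2) = 2 * sin θ := by
      rw [show 4 - (2 * cos θ) ^ 2 = (2 * sin θ) ^ 2 by nlinarith [sin_sq_add_cos_sq θ],
        sqrt_sq (by nlinarith [sin_nonneg_of_nonneg_of_le_pi hθ.1 hθ.2])]
    have hS : (S ℝ n).eval (2 * cos θ) * sin θ = sin ((n + 1) * θ) := by
      exact_mod_cast S_two_mul_real_cos θ n
    have hcos : cos (n * θ) - cos ((n + 2 : ℕ) * θ) = 2 * sin ((n + 1) * θ) * sin θ := by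
      rw [show (n : ℝ) * θ = (n + 1) * θ - θ by ring,
        show ((n + 2 : ℕ) : ℝ) * θ = (n + 1) * θ + θ by push_cast; ring, cos_sub, cos_add]
      ring
    simp only [hsqrt, hcos, ← hS]
    ring
  have hcont (m : ℕ) : IntervalIntegrable (fun θ => cos (m * θ)) MeasureTheory.volume 0 π :=
    (by fun_prop : Continuous fun θ => cos (m * θ)).intervalIntegrable _ _
  rw [integral_eq_integral_comp_two_mul_cos (by fun_prop), integral_congr hint,
    integral_const_mul, integral_sub (hcont n) (hcont (n + 2)), integral_cos_nat_mul,
    integral_cos_nat_mul]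
  split_ifs <;> simp_all

theorem trace_aeval_map_eq_integral {A : Type*} [Ring A] [Algebra ℂ A] (τ : A →ₗ[ℂ] ℂ) {y : A}
    (hy : ∀ k, τ (y ^ k) = semicircleMoment k) (p : ℝ[X]) :
    τ (aeval y (p.map (algebraMap ℝ ℂ))) =
      ((1 / (2 * π) * ∫ t in (-2 : ℝ)..2, p.eval t * √(4 - t ^ 2) : ℝ) : ℂ) := by
  induction p using Polynomial.induction_on' with
  | add p q hp hq =>
    have hint (r : ℝ[X]) :
        IntervalIntegrable (fun t => r.eval t * √(4 - t ^ 2)) MeasureTheory.volume (-2) 2 :=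
      (by fun_prop : Continuous fun t => r.eval t * √(4 - t ^ 2)).intervalIntegrable _ _
    simp only [Polynomial.map_add, map_add, hp, hq, eval_add, add_mul,
      integral_add (hint p) (hint q)]
    push_cast
    ring
  | monomial n a =>
    simp only [Polynomial.map_monomial, aeval_monomial, eval_monomial, mul_assoc,
      integral_const_mul, ← Algebra.smul_def, map_smul, hy, semicircleMoment,
      Complex.coe_algebraMap]
    push_cast
    ring

theorem trace_aeval_S {A : Type*} [Ring A] [Algebra ℂ A] (τ : A →ₗ[ℂ] ℂ) {y : A}
    (hy : ∀ k, τ (y ^ k) = semicircleMoment k) (n : ℕ) :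
    τ (aeval y (S ℂ n)) = if n = 0 then 1 else 0 := by
  rw [← map_S (algebraMap ℝ ℂ), trace_aeval_map_eq_integral τ hy, integral_S_eval_mul_sqrt]
  split_ifs
  · push_cast
    field_simp
  · simp

end Semicircle

section FreeChebyshev

variable {d : ℕ}

theorem ι_mul_cheb (i : Fin d) (w : List (Fin d)) :
    FreeAlgebra.ι ℂ i * cheb w =
      cheb (i :: w) + (if w.head? = some i then (1 : ℂ) else 0) • cheb w.tail := by
  cases w with
  | nil => simp [cheb]
  | cons j w => simp [cheb, eq_comm]

theorem cheb_append_singleton_mul_cheb_cons (L : List (Fin d)) (i j : Fin d) (J : List (Fin d)) :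
    cheb (L ++ [i]) * cheb (j :: J) =
      cheb (L ++ i :: j :: J) + (if i = j then (1 : ℂ) else 0) • (cheb L * cheb J) := by
  induction L using cheb.induct with
  | case1 => simpa [cheb.eq_1, cheb.eq_2, eq_comm] using ι_mul_cheb i (j :: J)
  | case2 a =>
    have h := ι_mul_cheb i (j :: J)
    simp only [List.head?_cons, Option.some.injEq, List.tail_cons] at h
    rw [List.singleton_append, List.singleton_append, cheb, cheb, cheb, cheb, sub_mul, mul_assoc,
      h, smul_mul_assoc, one_mul, cheb.eq_3 a i]
    simp only [mul_add, mul_smul_comm, eq_comm (a := j)]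
    module
  | case3 a b t ih₁ ih₂ =>
    simp only [List.cons_append] at ih₁ ⊢
    rw [cheb, cheb, cheb, sub_mul, mul_assoc, smul_mul_assoc, ih₁, ih₂]
    simp only [mul_add, sub_mul, mul_smul_comm, smul_mul_assoc, mul_assoc]
    module

theorem cheb_append {L J : List (Fin d)} (h : ∀ a ∈ L.getLast?, ∀ b ∈ J.head?, a ≠ b) :
    cheb (L ++ J) = cheb L * cheb J := by
  rcases J with _ | ⟨j, J⟩
  · simp [cheb]
  obtain rfl | ⟨L, i, rfl⟩ := L.eq_nil_or_concat'
  · simp [cheb]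
  rw [cheb_append_singleton_mul_cheb_cons, if_neg (h i (by simp) j rfl), zero_smul, add_zero,
    List.append_assoc, List.singleton_append]

theorem cheb_replicate (i : Fin d) (k : ℕ) :
    cheb (List.replicate k i) = aeval (FreeAlgebra.ι ℂ i) (S ℂ k) := by
  induction k using Nat.twoStepInduction with
  | zero => simp [cheb]
  | one => simp [cheb]
  | more k ih₁ ih₂ =>
    rw [List.replicate_succ, List.replicate_succ, cheb, ← List.replicate_succ, ih₁, ih₂]
    push_cast
    simp [S_add_two, Algebra.smul_def]

theorem List.exists_cons_eq_replicate_append {α : Type*} (a : α) (w : List α) :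
    ∃ k v, v.head? ≠ some a ∧ a :: w = List.replicate (k + 1) a ++ v := by
  induction w with
  | nil => exact ⟨0, [], by simp⟩
  | cons b w ih =>
    by_cases hb : b = a
    · obtain ⟨k, v, hv, hw⟩ := ih
      exact ⟨k + 1, v, hv, by rw [hb, hw]; rfl⟩
    · exact ⟨0, b :: w, by simpa using hb, rfl⟩

theorem exists_cheb_eq_prod (w : List (Fin d)) :
    ∃ l : List (Fin d × ℕ), l.IsChain (fun p q => p.1 ≠ q.1) ∧ (∀ p ∈ l, p.2 ≠ 0) ∧
      l.head?.map Prod.fst = w.head? ∧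
      cheb w = (l.map fun p => aeval (FreeAlgebra.ι ℂ p.1) (S ℂ p.2)).prod := by
  match w with
  | [] => exact ⟨[], by simp [cheb]⟩
  | a :: w =>
    obtain ⟨k, v, hva, hw⟩ := List.exists_cons_eq_replicate_append a w
    have hlen : v.length ≤ w.length := by
      have := congrArg List.length hw
      simp only [List.length_cons, List.length_append, List.length_replicate] at this
      omega
    obtain ⟨l, hchain, hpos, hhead, hv⟩ := exists_cheb_eq_prod v
    refine ⟨(a, k + 1) :: l, ?_, ?_, rfl, ?_⟩
    · refine List.isChain_cons.2 ⟨fun q hq h => hva ?_, hchain⟩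
      rw [← hhead, hq]; simpa using h.symm
    · simpa using hpos
    · rw [hw, cheb_append, cheb_replicate, hv, List.map_cons, List.prod_cons]
      simp only [List.getLast?_replicate, Nat.add_one_ne_zero, if_false, Option.mem_def,
        Option.some.injEq, forall_eq']
      rintro b hb rfl
      exact hva hb
termination_by w.length

section FreeSemicircular

variable {A : Type*} [Ring A] [StarRing A] [Algebra ℂ A] {τ : A →ₗ[ℂ] ℂ} {x : Fin d → A}

theorem IsFreeSemicircular.trace_prod_eq_zero (hx : IsFreeSemicircular τ x)
    {l : List (Fin d × ℂ[X])} (hl : l ≠ []) (hchain : l.IsChain fun p q => p.1 ≠ q.1)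
    (hcent : ∀ p ∈ l, τ (aeval (x p.1) p.2) = 0) :
    τ (l.map fun p => aeval (x p.1) p.2).prod = 0 := by
  obtain ⟨q, l, rfl⟩ := List.exists_cons_of_ne_nil hl
  have := hx.2.2 l.length (fun s => (q :: l)[(s : ℕ)].1)
    (fun s => List.isChain_iff_getElem.1 hchain s (by simp)) (fun s => (q :: l)[(s : ℕ)].2)
  have hcent' (s : Fin (l.length + 1)) :
      τ (aeval (x (q :: l)[(s : ℕ)].1) (q :: l)[(s : ℕ)].2) = 0 :=
    hcent _ (List.getElem_mem _)
  simp only [hcent', zero_smul, sub_zero] at this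
  convert this using 3
  exact (List.ofFn_getElem_eq_map _ _).symm

theorem IsFreeSemicircular.trace_lift_cheb (hx : IsFreeSemicircular τ x) (hτ : τ 1 = 1)
    (w : List (Fin d)) :
    τ (FreeAlgebra.lift ℂ x (cheb w)) = if w = [] then 1 else 0 := by
  rcases eq_or_ne w [] with rfl | hw
  · simpa [cheb] using hτ
  obtain ⟨l, hchain, hpos, hhead, hcheb⟩ := exists_cheb_eq_prod w
  have hl : l ≠ [] := by rintro rfl; cases w <;> simp_all
  have hcent : ∀ p ∈ l.map fun p => (p.1, S ℂ p.2), τ (aeval (x p.1) p.2) = 0 := by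
    simp only [List.mem_map, forall_exists_index, and_imp]
    rintro _ p hp rfl
    rw [trace_aeval_S τ (hx.2.1 p.1), if_neg (hpos p hp)]
  have := hx.trace_prod_eq_zero (by simpa using hl) ((List.isChain_map _).2 hchain) hcent
  rw [if_neg hw, hcheb, map_list_prod, List.map_map]
  simpa [Function.comp_def, ← aeval_algHom_apply] using this

end FreeSemicircular

theorem apply_cheb_mul_cheb {φ : FreeAlgebra ℂ (Fin d) →ₗ[ℂ] ℂ}
    (hφ : ∀ w, φ (cheb w) = if w = [] then 1 else 0) (L J : List (Fin d)) :
    φ (cheb L * cheb J) = if L.reverse = J then 1 else 0 := by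
  induction L using List.reverseRecOn generalizing J with
  | nil => simp [cheb, hφ, eq_comm]
  | append_singleton L i ih =>
    cases J with
    | nil => simp [cheb, hφ]
    | cons j J =>
      rw [cheb_append_singleton_mul_cheb_cons, map_add, map_smul, hφ, ih]
      by_cases hij : i = j <;> simp [hij]

theorem span_range_cheb : Submodule.span ℂ (Set.range (cheb (d := d))) = ⊤ := by
  set T := Submodule.span ℂ (Set.range (cheb (d := d)))
  have hι (i : Fin d) {v} (hv : v ∈ T) : FreeAlgebra.ι ℂ i * v ∈ T := by
    induction hv using Submodule.span_induction with
    | mem _ hv =>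
      obtain ⟨w, rfl⟩ := hv
      rw [ι_mul_cheb]
      exact T.add_mem (Submodule.subset_span ⟨_, rfl⟩)
        (T.smul_mem _ (Submodule.subset_span ⟨_, rfl⟩))
    | zero => simp
    | add _ _ _ _ ha hb => rw [mul_add]; exact T.add_mem ha hb
    | smul c _ _ ha => rw [mul_smul_comm]; exact T.smul_mem c ha
  have hmul (P : FreeAlgebra ℂ (Fin d)) {v} (hv : v ∈ T) : P * v ∈ T := by
    induction P using FreeAlgebra.induction generalizing v with
    | grade0 c => rw [← Algebra.smul_def]; exact T.smul_mem c hv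
    | grade1 i => exact hι i hv
    | mul a b ha hb => rw [mul_assoc]; exact ha (hb hv)
    | add a b ha hb => rw [add_mul]; exact T.add_mem (ha hv) (hb hv)
  refine eq_top_iff.2 fun P _ => ?_
  simpa [cheb] using hmul P (Submodule.subset_span ⟨[], rfl⟩)

/-- `∑_{J = u i v} P_u ⊗ P_v`. -/
def chebSplitSum (i : Fin d) (J : List (Fin d)) :
    FreeAlgebra ℂ (Fin d) ⊗[ℂ] FreeAlgebra ℂ (Fin d) :=
  ∑ n ∈ Finset.range J.length,
    if J[n]? = some i then cheb (J.take n) ⊗ₜ[ℂ] cheb (J.drop (n + 1)) else 0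

theorem chebSplitSum_nil (i : Fin d) : chebSplitSum i [] = 0 := by
  simp [chebSplitSum]

theorem chebSplitSum_cons (i j : Fin d) (w : List (Fin d)) :
    chebSplitSum i (j :: w) = (if j = i then 1 ⊗ₜ[ℂ] cheb w else 0) +
      ∑ n ∈ Finset.range w.length,
        if w[n]? = some i then cheb (j :: w.take n) ⊗ₜ[ℂ] cheb (w.drop (n + 1)) else 0 := by
  rw [chebSplitSum, List.length_cons, Finset.sum_range_succ', add_comm]
  simp [cheb]

theorem ι_tmul_one_mul_chebSplitSum (i j : Fin d) (w : List (Fin d)) :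
    (FreeAlgebra.ι ℂ j ⊗ₜ[ℂ] 1) * chebSplitSum i w =
      (∑ n ∈ Finset.range w.length,
        if w[n]? = some i then cheb (j :: w.take n) ⊗ₜ[ℂ] cheb (w.drop (n + 1)) else 0) +
      (if w.head? = some j then (1 : ℂ) else 0) • chebSplitSum i w.tail := by
  have hterm (u v : List (Fin d)) : (FreeAlgebra.ι ℂ j ⊗ₜ[ℂ] 1) * (cheb u ⊗ₜ[ℂ] cheb v) =
      cheb (j :: u) ⊗ₜ[ℂ] cheb v +
        (if u.head? = some j then (1 : ℂ) else 0) • (cheb u.tail ⊗ₜ[ℂ] cheb v) := by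
    rw [Algebra.TensorProduct.tmul_mul_tmul, one_mul, ι_mul_cheb, TensorProduct.add_tmul,
      TensorProduct.smul_tmul']
  simp only [chebSplitSum, Finset.mul_sum, mul_ite, mul_zero, hterm, ite_add_zero,
    Finset.sum_add_distrib]
  congr 1
  cases w with
  | nil => simp
  | cons j' t =>
    rw [List.length_cons, Finset.sum_range_succ']
    by_cases hj : j' = j <;> simp [hj]

section Derivation

variable
  {D : Fin d → FreeAlgebra ℂ (Fin d) →ₗ[ℂ] FreeAlgebra ℂ (Fin d) ⊗[ℂ] FreeAlgebra ℂ (Fin d)}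

theorem D_one (hD2 : ∀ (i : Fin d) (P Q : FreeAlgebra ℂ (Fin d)),
      D i (P * Q) = D i P * (1 ⊗ₜ[ℂ] Q) + (P ⊗ₜ[ℂ] 1) * D i Q) (i : Fin d) :
    D i 1 = 0 := by
  simpa [← Algebra.TensorProduct.one_def] using hD2 i 1 1

theorem D_cheb (hD1 : ∀ i j : Fin d, D i (FreeAlgebra.ι ℂ j) = if i = j then 1 ⊗ₜ[ℂ] 1 else 0)
    (hD2 : ∀ (i : Fin d) (P Q : FreeAlgebra ℂ (Fin d)),
      D i (P * Q) = D i P * (1 ⊗ₜ[ℂ] Q) + (P ⊗ₜ[ℂ] 1) * D i Q)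
    (i : Fin d) (J : List (Fin d)) : D i (cheb J) = chebSplitSum i J := by
  induction J using cheb.induct with
  | case1 => rw [cheb, D_one hD2, chebSplitSum_nil]
  | case2 j => simp [cheb, hD1, chebSplitSum_cons, eq_comm]
  | case3 j j' t ih₁ ih₂ =>
    rw [cheb, map_sub, map_smul, hD2, hD1, ih₁, ih₂, ι_tmul_one_mul_chebSplitSum,
      chebSplitSum_cons]
    simp only [List.head?_cons, Option.some.injEq, List.tail_cons, ite_mul, zero_mul,
      Algebra.TensorProduct.tmul_mul_tmul, one_mul, eq_comm (a := j'), eq_comm (a := i)]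
    abel

theorem PhiD_cheb {tb : FreeAlgebra ℂ (Fin d) →ₗ[ℂ] ℂ}
    (hT : ∀ w, tb (cheb w) = if w = [] then 1 else 0)
    (hD1 : ∀ i j : Fin d, D i (FreeAlgebra.ι ℂ j) = if i = j then 1 ⊗ₜ[ℂ] 1 else 0)
    (hD2 : ∀ (i : Fin d) (P Q : FreeAlgebra ℂ (Fin d)),
      D i (P * Q) = D i P * (1 ⊗ₜ[ℂ] Q) + (P ⊗ₜ[ℂ] 1) * D i Q)
    (R J : List (Fin d)) : PhiD tb D R (cheb J) = if R = J then 1 else 0 := by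
  induction R generalizing J with
  | nil => simp [PhiD, hT, eq_comm]
  | cons i r ih =>
    simp only [PhiD, LinearMap.comp_apply, D_cheb hD1 hD2]
    cases J with
    | nil => simp [chebSplitSum_nil]
    | cons j w =>
      have h1 : tb 1 = 1 := by simpa [cheb] using hT []
      simp only [chebSplitSum_cons, map_add, map_sum, apply_ite, TensorProduct.map_tmul,
        LinearMap.mul'_apply, map_zero, hT, ih, h1, List.cons_ne_nil, if_false, zero_mul, ite_self,
        Finset.sum_const_zero, add_zero, one_mul, List.cons.injEq]
      by_cases hij : i = j <;> simp [hij, eq_comm]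

end Derivation

end FreeChebyshev

theorem cheb_adjoint_of_deriv_general {d : ℕ} {A : Type*} [NormedRing A] [StarRing A]
    [NormedAlgebra ℂ A]
    (τ : A →ₗ[ℂ] ℂ) (x : Fin d → A)
    (hx : IsFreeSemicircular τ x)
    (D : Fin d → (FreeAlgebra ℂ (Fin d) →ₗ[ℂ]
      FreeAlgebra ℂ (Fin d) ⊗[ℂ] FreeAlgebra ℂ (Fin d)))
    (hD1 : ∀ i j : Fin d, D i (FreeAlgebra.ι ℂ j) =
      if i = j then (1 : FreeAlgebra ℂ (Fin d)) ⊗ₜ[ℂ] (1 : FreeAlgebra ℂ (Fin d)) else 0)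
    (hD2 : ∀ (i : Fin d) (P Q : FreeAlgebra ℂ (Fin d)),
      D i (P * Q) = D i P * ((1 : FreeAlgebra ℂ (Fin d)) ⊗ₜ[ℂ] Q)
        + (P ⊗ₜ[ℂ] (1 : FreeAlgebra ℂ (Fin d))) * D i Q)
    (Q : FreeAlgebra ℂ (Fin d)) (L : List (Fin d)) :
    τ (FreeAlgebra.lift ℂ x (cheb L) * FreeAlgebra.lift ℂ x Q) =
      PhiD (τ ∘ₗ (FreeAlgebra.lift ℂ x).toLinearMap) D L.reverse Q := by
  cases L with
  | nil => simp [cheb, PhiD]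
  | cons i L =>
    set tb := τ ∘ₗ (FreeAlgebra.lift ℂ x).toLinearMap
    -- a letter `i` is needed to read off `τ 1 = 1` as the zeroth moment of `x i`
    have hτ : τ 1 = 1 := by simpa using trace_aeval_S τ (hx.2.1 i) 0
    have hT : ∀ w, tb (cheb w) = if w = [] then 1 else 0 := hx.trace_lift_cheb hτ
    have h : tb ∘ₗ LinearMap.mulLeft ℂ (cheb (i :: L)) = PhiD tb D (i :: L).reverse :=
      LinearMap.ext_on_range span_range_cheb fun J => by
        simp [apply_cheb_mul_cheb hT, PhiD_cheb hT hD1 hD2]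
    simpa [tb] using LinearMap.congr_fun h Q

/-- `τ(P_{i_n,…,i_1}(x) · Q(x)) = Φ(∂_{i_1,…,i_n} Q)` where
`Φ(A_1 ⊗ ⋯ ⊗ A_{n+1}) = τ(A_1(x))⋯τ(A_{n+1}(x))`. Here `D` is the (unique)
noncommutative derivative, and `Φ ∘ ∂_{i_1,…,i_n}` is expressed as
`PhiD (τ ∘ ev) D [i_1, …, i_n]`; the word of `cheb` is `[i_n, …, i_1]`, whence
the `List.reverse`. -/
theorem cheb_adjoint_of_deriv {d : ℕ} {A : Type*} [NormedRing A] [StarRing A]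
    [CStarRing A] [CompleteSpace A] [NormedAlgebra ℂ A] [StarModule ℂ A]
    (τ : A →ₗ[ℂ] ℂ) (x : Fin d → A)
    (hτ : IsFaithfulTracialState τ) (hx : IsFreeSemicircular τ x)
    (D : Fin d → (FreeAlgebra ℂ (Fin d) →ₗ[ℂ]
      FreeAlgebra ℂ (Fin d) ⊗[ℂ] FreeAlgebra ℂ (Fin d)))
    (hD1 : ∀ i j : Fin d, D i (FreeAlgebra.ι ℂ j) =
      if i = j then (1 : FreeAlgebra ℂ (Fin d)) ⊗ₜ[ℂ] (1 : FreeAlgebra ℂ (Fin d)) else 0)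
    (hD2 : ∀ (i : Fin d) (P Q : FreeAlgebra ℂ (Fin d)),
      D i (P * Q) = D i P * ((1 : FreeAlgebra ℂ (Fin d)) ⊗ₜ[ℂ] Q)
        + (P ⊗ₜ[ℂ] (1 : FreeAlgebra ℂ (Fin d))) * D i Q)
    (Q : FreeAlgebra ℂ (Fin d)) (L : List (Fin d)) :
    τ (FreeAlgebra.lift ℂ x (cheb L) * FreeAlgebra.lift ℂ x Q) =
      PhiD (τ ∘ₗ (FreeAlgebra.lift ℂ x).toLinearMap) D L.reverse Q :=
  cheb_adjoint_of_deriv_general τ x hx D hD1 hD2 Q L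
end

section
/- For all k ∈ {1,…,d}, all n ≥ 1 and all indices i_1,…,i_n ∈ {1,…,d}, one has ∂_k P_{i_n,…,i_1} = Σ_{j=1}^{n} δ_{i_j,k} · P_{i_n,…,i_{j+1}} ⊗ P_{i_{j−1},…,i_1} (with the conventions that the empty tuple gives P_∅ = 1). -/
open scoped ComplexOrder TensorProduct

/-!
Both sides obey the recursion of the free Chebyshev polynomials. Applying the Leibniz rule to
`P_{i,j,w} = X_i P_{j,w} - δ_{ij} P_w` and expanding each left tensor factor once more through
`X_i P_{j,u} = P_{i,j,u} + δ_{ij} P_u`, the correction terms add up to exactly `δ_{ij} ∂_k P_w`.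
-/

theorem map_one_eq_zero_of_leibniz {R A : Type*} [CommRing R] [Ring A] [Algebra R A]
    {D : A → A ⊗[R] A} (hD : ∀ P Q, D (P * Q) = D P * (1 ⊗ₜ Q) + (P ⊗ₜ 1) * D Q) :
    D 1 = 0 := by
  simpa [← Algebra.TensorProduct.one_def] using hD 1 1

section Chebyshev

variable {d : ℕ}

theorem cheb_nil : (cheb [] : FreeAlgebra ℂ (Fin d)) = 1 := rfl

theorem cheb_cons_cons (i j : Fin d) (w : List (Fin d)) :
    cheb (i :: j :: w) =
      FreeAlgebra.ι ℂ i * cheb (j :: w) - (if i = j then (1 : ℂ) else 0) • cheb w := rfl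

theorem ι_mul_cheb_cons (i j : Fin d) (w : List (Fin d)) :
    FreeAlgebra.ι ℂ i * cheb (j :: w) =
      cheb (i :: j :: w) + (if i = j then (1 : ℂ) else 0) • cheb w := by
  rw [cheb_cons_cons, sub_add_cancel]

def chebDeriv (k : Fin d) (L : List (Fin d)) :
    FreeAlgebra ℂ (Fin d) ⊗[ℂ] FreeAlgebra ℂ (Fin d) :=
  ∑ t : Fin L.length, (if L.get t = k then (1 : ℂ) else 0) •
    (cheb (L.take t) ⊗ₜ[ℂ] cheb (L.drop (t + 1)))

theorem chebDeriv_cons (k i : Fin d) (v : List (Fin d)) :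
    chebDeriv k (i :: v) = (if i = k then (1 : ℂ) else 0) • (1 ⊗ₜ cheb v) +
      ∑ t : Fin v.length, (if v.get t = k then (1 : ℂ) else 0) •
        (cheb (i :: v.take t) ⊗ₜ[ℂ] cheb (v.drop (t + 1))) := by
  simp [chebDeriv, Fin.sum_univ_succ, cheb_nil]

theorem chebDeriv_singleton (k i : Fin d) :
    chebDeriv k [i] = if k = i then 1 ⊗ₜ 1 else 0 := by
  simp [chebDeriv_cons, cheb_nil, eq_comm]

theorem ι_tmul_one_mul_chebDeriv (k i : Fin d) (v : List (Fin d)) :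
    (FreeAlgebra.ι ℂ i ⊗ₜ 1) * chebDeriv k v =
      ∑ t : Fin v.length, (if v.get t = k then (1 : ℂ) else 0) •
        ((FreeAlgebra.ι ℂ i * cheb (v.take t)) ⊗ₜ[ℂ] cheb (v.drop (t + 1))) := by
  simp [chebDeriv, Finset.mul_sum, Algebra.TensorProduct.tmul_mul_tmul]

theorem chebDeriv_cons_cons (k i j : Fin d) (w : List (Fin d)) :
    chebDeriv k (i :: j :: w) = chebDeriv k [i] * (1 ⊗ₜ cheb (j :: w)) +
      (FreeAlgebra.ι ℂ i ⊗ₜ 1) * chebDeriv k (j :: w) -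
      (if i = j then (1 : ℂ) else 0) • chebDeriv k w := by
  set S := ∑ t : Fin w.length, (if w.get t = k then (1 : ℂ) else 0) •
    (cheb (i :: j :: w.take t) ⊗ₜ[ℂ] cheb (w.drop (t + 1)))
  have hleft : chebDeriv k (i :: j :: w) =
      (if i = k then (1 : ℂ) else 0) • (1 ⊗ₜ cheb (j :: w)) +
        ((if j = k then (1 : ℂ) else 0) • (cheb [i] ⊗ₜ cheb w) + S) := by
    rw [chebDeriv_cons]
    simp only [List.length_cons, Fin.sum_univ_succ]
    rfl
  have hmul : (FreeAlgebra.ι ℂ i ⊗ₜ 1) * chebDeriv k (j :: w) =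
      (if j = k then (1 : ℂ) else 0) • (cheb [i] ⊗ₜ cheb w) + S +
        (if i = j then (1 : ℂ) else 0) • chebDeriv k w := by
    rw [ι_tmul_one_mul_chebDeriv]
    simp only [List.length_cons, Fin.sum_univ_succ, List.get_cons_zero, Fin.val_zero, Fin.val_succ,
      List.take_zero, List.take_succ_cons, List.drop_succ_cons, List.drop_zero, cheb_nil, mul_one,
      ι_mul_cheb_cons, TensorProduct.add_tmul, smul_add, Finset.sum_add_distrib]
    rw [add_assoc]
    congr 2
    rw [chebDeriv, Finset.smul_sum]
    simp only [TensorProduct.smul_tmul', smul_comm (if i = j then (1 : ℂ) else 0)]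
    rfl
  have hsingle : chebDeriv k [i] * (1 ⊗ₜ cheb (j :: w)) =
      (if i = k then (1 : ℂ) else 0) • (1 ⊗ₜ cheb (j :: w)) := by
    simp [chebDeriv_singleton, @eq_comm _ k i]
  rw [hleft, hmul, hsingle]
  abel

end Chebyshev

theorem cheb_deriv_general {d : ℕ}
    (D : Fin d → (FreeAlgebra ℂ (Fin d) →ₗ[ℂ]
      FreeAlgebra ℂ (Fin d) ⊗[ℂ] FreeAlgebra ℂ (Fin d)))
    (hD1 : ∀ i j : Fin d, D i (FreeAlgebra.ι ℂ j) =
      if i = j then (1 : FreeAlgebra ℂ (Fin d)) ⊗ₜ[ℂ] (1 : FreeAlgebra ℂ (Fin d)) else 0)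
    (hD2 : ∀ (i : Fin d) (P Q : FreeAlgebra ℂ (Fin d)),
      D i (P * Q) = D i P * ((1 : FreeAlgebra ℂ (Fin d)) ⊗ₜ[ℂ] Q)
        + (P ⊗ₜ[ℂ] (1 : FreeAlgebra ℂ (Fin d))) * D i Q)
    (k : Fin d) (L : List (Fin d)) :
    D k (cheb L) =
      ∑ t : Fin L.length,
        (if L.get t = k then (1 : ℂ) else 0) •
          (cheb (L.take t) ⊗ₜ[ℂ] cheb (L.drop (t + 1))) := by
  show D k (cheb L) = chebDeriv k L
  have hι (i : Fin d) : D k (FreeAlgebra.ι ℂ i) = chebDeriv k [i] := by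
    rw [hD1, chebDeriv_singleton]
  induction L using cheb.induct with
  | case1 => exact map_one_eq_zero_of_leibniz (hD2 k)
  | case2 i => exact hι i
  | case3 i j w ih₁ ih₂ =>
    rw [cheb_cons_cons, map_sub, map_smul, hD2, hι, ih₁, ih₂, chebDeriv_cons_cons]

/-- The noncommutative derivative of a free Chebyshev polynomial:
`∂_k P_{i_n,…,i_1} = Σ_j δ_{i_j,k} P_{i_n,…,i_{j+1}} ⊗ P_{i_{j−1},…,i_1}`.
Here `D` is the (unique) noncommutative derivative, characterized by its value on
generators and the Leibniz rule. -/
theorem cheb_deriv {d : ℕ}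
    (D : Fin d → (FreeAlgebra ℂ (Fin d) →ₗ[ℂ]
      FreeAlgebra ℂ (Fin d) ⊗[ℂ] FreeAlgebra ℂ (Fin d)))
    (hD1 : ∀ i j : Fin d, D i (FreeAlgebra.ι ℂ j) =
      if i = j then (1 : FreeAlgebra ℂ (Fin d)) ⊗ₜ[ℂ] (1 : FreeAlgebra ℂ (Fin d)) else 0)
    (hD2 : ∀ (i : Fin d) (P Q : FreeAlgebra ℂ (Fin d)),
      D i (P * Q) = D i P * ((1 : FreeAlgebra ℂ (Fin d)) ⊗ₜ[ℂ] Q)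
        + (P ⊗ₜ[ℂ] (1 : FreeAlgebra ℂ (Fin d))) * D i Q)
    (k : Fin d) (L : List (Fin d)) (hL : L ≠ []) :
    D k (cheb L) =
      ∑ t : Fin L.length,
        (if L.get t = k then (1 : ℂ) else 0) •
          (cheb (L.take t) ⊗ₜ[ℂ] cheb (L.drop (t + 1))) :=
  cheb_deriv_general D hD1 hD2 k L
end

section
/- For all tuples (i_n,…,i_1) ∈ {1,…,d}^n and (j_m,…,j_1) ∈ {1,…,d}^m, one has P_{i_n,…,i_1} · P_{j_m,…,j_1} = Σ_{s=0}^{min(n,m)} [i_r = j_{m−r+1} for all 1 ≤ r ≤ s] · P_{i_n,…,i_{s+1},j_{m−s},…,j_1}, where [·] denotes the indicator (equal to 1 if the condition holds and 0 otherwise) and P_{i_n,…,i_{s+1},j_{m−s},…,j_1} is the free Chebyshev polynomial indexed by the concatenated word of length n+m−2s. -/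
open scoped ComplexOrder TensorProduct

/-! The recursion defining `cheb` peels letters off the left, but the same recursion holds on the
right: `P_{w g j} = P_{w g} X_j - δ_{g j} P_w`. Feeding the letters of the second factor in one at a
time gives `P_{w g} P_{j v} = P_{w g j v} + δ_{g j} P_w P_v`: a product contracts at most the pair
of letters where the two words meet and then recurses on what is left. The right-hand side of the
product formula obeys the same recursion, since its `s`-th term either contracts nothing
(`s = 0`) or contracts `g` against `j` first. -/

namespace FreeChebyshev

variable {d : ℕ}

local notation "δ" i:max j:max => (if i = j then (1 : ℂ) else 0)

theorem cheb_cons_cons (i j : Fin d) (t : List (Fin d)) :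
    cheb (i :: j :: t) = FreeAlgebra.ι ℂ i * cheb (j :: t) - δ i j • cheb t :=
  rfl

theorem cheb_append_pair (g j : Fin d) :
    ∀ B : List (Fin d), cheb (B ++ [g, j]) = cheb (B ++ [g]) * FreeAlgebra.ι ℂ j - δ g j • cheb B
  | [] => rfl
  | [i] => by
    simp only [List.singleton_append, cheb_cons_cons, cheb, mul_sub, sub_mul, mul_smul_comm,
      smul_mul_assoc, mul_one, one_mul, mul_assoc]
    module
  | i :: k :: t => by
    simp only [List.cons_append, cheb_cons_cons]
    rw [← List.cons_append, cheb_append_pair g j (k :: t), cheb_append_pair g j t]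
    simp only [List.cons_append, mul_sub, sub_mul, mul_smul_comm, smul_mul_assoc, mul_assoc]
    module

theorem cheb_append_singleton_mul_cons (N : List (Fin d)) :
    ∀ (B : List (Fin d)) (g j : Fin d),
      cheb (B ++ [g]) * cheb (j :: N) = cheb (B ++ g :: j :: N) + δ g j • (cheb B * cheb N) := by
  induction N with
  | nil =>
    intro B g j
    rw [cheb_append_pair]
    simp only [cheb, mul_one]
    abel
  | cons k N ih =>
    intro B g j
    have hgj : cheb (B ++ [g]) * FreeAlgebra.ι ℂ j = cheb (B ++ [g, j]) + δ g j • cheb B := by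
      rw [cheb_append_pair]; abel
    have hjk := ih (B ++ [g]) j k
    simp only [List.append_assoc, List.singleton_append] at hjk
    rw [cheb_cons_cons, mul_sub, mul_smul_comm, ← mul_assoc, hgj, add_mul, hjk,
      smul_mul_assoc]
    abel

def chebMulSum (L M : List (Fin d)) : FreeAlgebra ℂ (Fin d) :=
  ∑ s ∈ Finset.range (min L.length M.length + 1),
    δ (L.drop (L.length - s)).reverse (M.take s) • cheb (L.take (L.length - s) ++ M.drop s)

theorem chebMulSum_nil_left (M : List (Fin d)) : chebMulSum [] M = cheb M := by
  simp [chebMulSum]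

theorem chebMulSum_nil_right (L : List (Fin d)) : chebMulSum L [] = cheb L := by
  simp [chebMulSum]

theorem chebMulSum_append_singleton_cons (B N : List (Fin d)) (g j : Fin d) :
    chebMulSum (B ++ [g]) (j :: N) = cheb (B ++ g :: j :: N) + δ g j • chebMulSum B N := by
  unfold chebMulSum
  simp only [List.length_append, List.length_cons, List.length_nil, Nat.zero_add,
    Nat.succ_min_succ]
  rw [Finset.sum_range_succ', add_comm]
  congr 1
  · simp [List.take_of_length_le]
  · rw [Finset.smul_sum]
    refine Finset.sum_congr rfl fun s hs => ?_
    simp only [Finset.mem_range] at hs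
    have hlen : B.length + 1 - (s + 1) = B.length - s := by omega
    rw [hlen, List.drop_append_of_le_length (by omega),
      List.take_append_of_le_length (by omega), List.reverse_append]
    simp only [List.reverse_singleton, List.singleton_append, List.take_succ_cons,
      List.drop_succ_cons, List.cons.injEq]
    by_cases hgj : g = j <;> simp [hgj]

theorem cheb_mul_eq_chebMulSum (L M : List (Fin d)) : cheb L * cheb M = chebMulSum L M := by
  induction M generalizing L with
  | nil => rw [chebMulSum_nil_right]; exact mul_one _
  | cons j N ih =>
    rcases L.eq_nil_or_concat with rfl | ⟨B, g, rfl⟩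
    · rw [chebMulSum_nil_left]; exact one_mul _
    · rw [List.concat_eq_append, cheb_append_singleton_mul_cons, ih,
        chebMulSum_append_singleton_cons]

end FreeChebyshev

/-- The product formula for free Chebyshev polynomials:
`P_{i_n,…,i_1} · P_{j_m,…,j_1}
  = Σ_{s=0}^{min(n,m)} [i_r = j_{m−r+1} for 1 ≤ r ≤ s] P_{i_n,…,i_{s+1},j_{m−s},…,j_1}`. -/
theorem cheb_mul {d : ℕ} (L M : List (Fin d)) :
    cheb L * cheb M =
      ∑ s ∈ Finset.range (min L.length M.length + 1),
        (if (L.drop (L.length - s)).reverse = M.take s then (1 : ℂ) else 0) •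
          cheb (L.take (L.length - s) ++ M.drop s) :=
  FreeChebyshev.cheb_mul_eq_chebMulSum L M
end

section
/- Let k ≥ 1, let i_1,…,i_k ∈ {1,…,d} satisfy i_j ≠ i_{j+1} for all 1 ≤ j ≤ k−1, and let d_1,…,d_k ≥ 1. Then the free Chebyshev polynomial indexed by the word consisting of d_1 copies of i_1 followed by d_2 copies of i_2, …, followed by d_k copies of i_k equals the product 𝒰_{d_1}(X_{i_1})·𝒰_{d_2}(X_{i_2})⋯𝒰_{d_k}(X_{i_k}) in ℂ⟨X_1,…,X_d⟩. -/
open scoped ComplexOrder TensorProduct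

/-! Inside a block `i^m` the recursion for `P` is the three-term recursion of `𝒰_m`. Where the
block meets the next one the letters differ, so the correction term vanishes and
`P_{i w} = X_i P_w`. Hence the blocks split off one at a time as left factors `𝒰_m(X_i)`. -/

lemma List.head?_flatten_map_replicate {α : Type*} {L : List (α × ℕ)}
    (h : ∀ p ∈ L, 1 ≤ p.2) :
    (L.map fun p => List.replicate p.2 p.1).flatten.head? = L.head?.map Prod.fst := by
  cases L with
  | nil => rfl
  | cons p t =>
    obtain ⟨n, hn⟩ : ∃ n, p.2 = n + 1 := ⟨p.2 - 1, by grind⟩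
    simp [hn, List.replicate_succ]

section

variable {d : ℕ}

lemma cheb_cons_of_head?_ne {i : Fin d} {L : List (Fin d)} (h : L.head? ≠ some i) :
    cheb (i :: L) = FreeAlgebra.ι ℂ i * cheb L := by
  cases L with
  | nil => simp [cheb]
  | cons j t =>
    have hij : i ≠ j := fun e => h (by simp [e])
    simp [cheb, hij]

lemma cheb_replicate_append {i : Fin d} {L : List (Fin d)} (h : L.head? ≠ some i) :
    ∀ m : ℕ, cheb (List.replicate m i ++ L) =
      Polynomial.aeval (FreeAlgebra.ι ℂ i) (chebU m) * cheb L
  | 0 => by simp [chebU]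
  | 1 => by simpa [chebU] using cheb_cons_of_head?_ne h
  | m + 2 => by
    calc cheb (List.replicate (m + 2) i ++ L)
        = FreeAlgebra.ι ℂ i * cheb (List.replicate (m + 1) i ++ L)
            - cheb (List.replicate m i ++ L) := by
          simp [cheb, List.replicate_succ]
      _ = Polynomial.aeval (FreeAlgebra.ι ℂ i) (chebU (m + 2)) * cheb L := by
          rw [cheb_replicate_append h (m + 1), cheb_replicate_append h m]
          simp only [chebU, map_sub, map_mul, Polynomial.aeval_X]
          noncomm_ring

lemma cheb_flatten_map_replicate {L : List (Fin d × ℕ)} (hpos : ∀ p ∈ L, 1 ≤ p.2)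
    (hchain : L.IsChain fun p q => p.1 ≠ q.1) :
    cheb (L.map fun p => List.replicate p.2 p.1).flatten =
      (L.map fun p => Polynomial.aeval (FreeAlgebra.ι ℂ p.1) (chebU p.2)).prod := by
  induction L with
  | nil => simp [cheb]
  | cons p t ih =>
    have hhead : (t.map fun q => List.replicate q.2 q.1).flatten.head? ≠ some p.1 := by
      rw [List.head?_flatten_map_replicate fun q hq => hpos q (List.mem_cons_of_mem p hq)]
      cases t with
      | nil => simp
      | cons q t' => simpa [eq_comm] using (List.isChain_cons_cons.mp hchain).1
    rw [List.map_cons, List.flatten_cons, cheb_replicate_append hhead,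
      ih (fun q hq => hpos q (List.mem_cons_of_mem p hq)) hchain.tail, List.map_cons,
      List.prod_cons]

end

/-- The free Chebyshev polynomial indexed by the word
`i_1^{d_1} i_2^{d_2} ⋯ i_k^{d_k}` (with `i_j ≠ i_{j+1}`) equals the product
`𝒰_{d_1}(X_{i_1}) ⋯ 𝒰_{d_k}(X_{i_k})`. -/
theorem cheb_factorization {d k : ℕ} (is : Fin k → Fin d)
    (his : ∀ j : Fin (k - 1), is ⟨j, by omega⟩ ≠ is ⟨j + 1, by omega⟩)
    (dd : Fin k → ℕ) (hdd : ∀ j, 1 ≤ dd j) :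
    cheb ((List.ofFn fun j : Fin k => List.replicate (dd j) (is j)).flatten) =
      (List.ofFn fun j : Fin k =>
        Polynomial.aeval (FreeAlgebra.ι ℂ (is j)) (chebU (dd j))).prod := by
  have hpos : ∀ p ∈ List.ofFn (fun j => (is j, dd j)), 1 ≤ p.2 := by
    simpa [List.mem_ofFn] using hdd
  have hchain : (List.ofFn fun j => (is j, dd j)).IsChain fun p q => p.1 ≠ q.1 :=
    List.isChain_ofFn.mpr fun n hn => his ⟨n, by omega⟩
  simpa [List.map_ofFn, Function.comp_def] using cheb_flatten_map_replicate hpos hchain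
end
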